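/- Let PO be the class of all finite strict partial orders (one binary relation symbol, interpreted as an irreflexive transitive relation), let T be the class of all finite tournaments (one binary relation symbol R, irreflexive, with exactly one of R(a,b), R(b,a) holding for all distinct a, b), let DG be the class of all finite directed graphs (one binary relation symbol, irreflexive), and let G be the class of all finite graphs (one binary relation symbol, irreflexive and symmetric). Then for every language L and every complete L-theory T' with infinite models, the following are equivalent: T' admits a PO-configuration; T' admits a T-configuration; T' admits a DG-configuration; T' admits a G-configuration. -/

import Mathlib

/- Definitions following "Products of Classes of Finite Structures"
   (Guingona, Parnes, Scow). -/

open CategoryTheory FirstOrder FirstOrder.Language FirstOrder.Language.Structure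

universe u v w w' u0 v0 u1 v1

namespace ProductsPaper

instance graphIsRelational : Language.graph.IsRelational :=
  fun _ => inferInstanceAs (IsEmpty Empty)

/-- The induced structure on a subset, for a relational language. -/
instance setStructure (L : FirstOrder.Language.{u, v}) [L.IsRelational] {M : Type w}
    [L.Structure M] (s : Set M) : L.Structure s where
  funMap f _ := isEmptyElim f
  RelMap R x := RelMap R fun i => (x i : M)

/-- A class of structures: a set of bundled structures (with universes in `Type 0`). -/
abbrev StructClass (L : FirstOrder.Language.{u, v}) := Set (Bundled.{0} L.Structure)

variable {L : FirstOrder.Language.{u, v}}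

/-- Every member of the class is finite. -/
def AllFinite (K : StructClass L) : Prop := ∀ A ∈ K, Finite A

/-- The class is closed under isomorphism. -/
def IsoClosed (K : StructClass L) : Prop :=
  ∀ A ∈ K, ∀ B : Bundled.{0} L.Structure, Nonempty (A ≃[L] B) → B ∈ K

/-- The class `K` is indivisible: for every `A ∈ K` and `k ≥ 2` there is `B ∈ K` such that
every `k`-coloring of `B` admits a monochromatic embedded copy of `A`. -/
def Indivisible (K : StructClass L) : Prop :=
  ∀ A ∈ K, ∀ k : ℕ, 2 ≤ k → ∃ B ∈ K, ∀ c : B → Fin k,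
    ∃ f : A ↪[L] B, ∃ i : Fin k, ∀ a : A, c (f a) = i

/-- The joint embedding property. -/
def JEP (K : StructClass L) : Prop :=
  ∀ A ∈ K, ∀ B ∈ K, ∃ C ∈ K, Nonempty (A ↪[L] C) ∧ Nonempty (B ↪[L] C)

/-- The amalgamation property. -/
def AP (K : StructClass L) : Prop :=
  ∀ (A B₀ B₁ : Bundled.{0} L.Structure), A ∈ K → B₀ ∈ K → B₁ ∈ K →
    ∀ (f₀ : A ↪[L] B₀) (f₁ : A ↪[L] B₁),
      ∃ C ∈ K, ∃ (g₀ : B₀ ↪[L] C) (g₁ : B₁ ↪[L] C), g₀.comp f₀ = g₁.comp f₁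

/-- The strong (disjoint) amalgamation property. -/
def SAP (K : StructClass L) : Prop :=
  ∀ (A B₀ B₁ : Bundled.{0} L.Structure), A ∈ K → B₀ ∈ K → B₁ ∈ K →
    ∀ (f₀ : A ↪[L] B₀) (f₁ : A ↪[L] B₁),
      ∃ C ∈ K, ∃ (g₀ : B₀ ↪[L] C) (g₁ : B₁ ↪[L] C), g₀.comp f₀ = g₁.comp f₁ ∧
        Set.range g₀ ∩ Set.range g₁ = Set.range (g₀.comp f₀)

/-- The hereditary property: every substructure (equivalently, subset, since the language is
relational) of a member of the class is a member of the class. -/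
def HereditaryC [L.IsRelational] (K : StructClass L) : Prop :=
  ∀ A ∈ K, ∀ s : Set A, (⟨s, setStructure L s⟩ : Bundled.{0} L.Structure) ∈ K

/-- The age of a structure: the class of all finite structures embeddable in it. -/
def ageC (L : FirstOrder.Language.{u, v}) (M : Type w) [L.Structure M] : StructClass L :=
  {A | Finite A ∧ Nonempty (A ↪[L] M)}

/-- The proper subsets of `{0, …, n-1}`, indexing a disjoint amalgamation problem. -/
abbrev ProperSub (n : ℕ) := {p : Finset (Fin n) // p ≠ Finset.univ}

lemma inter_ne_univ {n : ℕ} (p q : ProperSub n) : p.1 ∩ q.1 ≠ Finset.univ := by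
  intro h
  apply p.2
  apply Finset.eq_univ_of_forall
  intro x
  have hx : x ∈ p.1 ∩ q.1 := by rw [h]; exact Finset.mem_univ x
  exact (Finset.mem_inter.mp hx).1

/-- The intersection of two proper subsets of `Fin n`, as a proper subset. -/
def interP {n : ℕ} (p q : ProperSub n) : ProperSub n := ⟨p.1 ∩ q.1, inter_ne_univ p q⟩

/-- The disjoint `n`-amalgamation property: every disjoint amalgamation system indexed by the
proper subsets of `{0, …, n-1}` extends to a disjoint amalgamation system indexed by all
subsets of `{0, …, n-1}`, i.e., it admits a top structure `C ∈ K` together with embeddings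
commuting with the given system and satisfying the disjointness condition. -/
def DisjointNAmalg (K : StructClass L) (n : ℕ) : Prop :=
  ∀ (A : ProperSub n → Bundled.{0} L.Structure)
    (f : ∀ p q : ProperSub n, p.1 ⊆ q.1 → (A p ↪[L] A q)),
    (∀ p, A p ∈ K) →
    (∀ (p : ProperSub n) (h : p.1 ⊆ p.1), f p p h = Embedding.refl L (A p)) →
    (∀ (p q r : ProperSub n) (hpq : p.1 ⊆ q.1) (hqr : q.1 ⊆ r.1),
      f p r (hpq.trans hqr) = (f q r hqr).comp (f p q hpq)) →
    (∀ (p q r : ProperSub n) (hpr : p.1 ⊆ r.1) (hqr : q.1 ⊆ r.1),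
      Set.range (f p r hpr) ∩ Set.range (f q r hqr)
        = Set.range (f (interP p q) r (Finset.inter_subset_left.trans hpr))) →
    ∃ C ∈ K, ∃ g : ∀ p : ProperSub n, A p ↪[L] C,
      (∀ (p q : ProperSub n) (hpq : p.1 ⊆ q.1), (g q).comp (f p q hpq) = g p) ∧
      (∀ p q : ProperSub n,
        Set.range (g p) ∩ Set.range (g q) = Set.range (g (interP p q)))

section DSS

variable (L) [L.IsRelational]

/-- `qfClassSet L C0 c` is the set of elements `c'` such that the map fixing `C0`
pointwise and sending `c` to `c'` is an isomorphism from `C0 ∪ {c}` onto `C0 ∪ {c'}`. -/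
def qfClassSet {C : Type w} [L.Structure C] (C0 : Set C) (c : C) : Set C :=
  {c' | c' ∉ C0 ∧ ∀ ⦃m : ℕ⦄ (R : L.Relations m) (x x' : Fin m → C),
    (∀ i, (x i = c ∧ x' i = c') ∨ (x i ∈ C0 ∧ x' i = x i)) →
    (RelMap R x ↔ RelMap R x')}

/-- A class of structures is definably self-similar. -/
def DefinablySelfSimilar (K : StructClass L) : Prop :=
  ∀ A B C : Bundled.{0} L.Structure, A ∈ K → B ∈ K → C ∈ K →
    ∀ (f : A ↪[L] B) (C0 : Set C) (c : C), c ∉ C0 →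
    ∀ g : A ↪[L] (qfClassSet L C0 c), ∃ D ∈ K, ∃ (j : C ↪[L] D)
      (h : B ↪[L] (qfClassSet L (⇑j '' C0) (j c))),
      ∀ a : A, (h (f a) : D) = j (g a : C)

end DSS

/-- The class `K` has exactly one singleton structure up to isomorphism. -/
def UniqueSingleton (K : StructClass L) : Prop :=
  (∃ A ∈ K, Nonempty A ∧ Subsingleton A) ∧
  (∀ A B : Bundled.{0} L.Structure, A ∈ K → B ∈ K →
    Nonempty A → Subsingleton A → Nonempty B → Subsingleton B → Nonempty (A ≃[L] B))

/-- Ultrahomogeneity: every embedding of a finite substructure extends to an automorphism. -/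
def Ultrahomogeneous (L : FirstOrder.Language.{u, v}) [L.IsRelational] (M : Type w)
    [L.Structure M] : Prop :=
  ∀ s : Set M, s.Finite → ∀ f : s ↪[L] M, ∃ g : M ≃[L] M, ∀ x : s, g x = f x

/-- The class has countably many structures up to isomorphism. -/
def EssentiallyCountable (K : StructClass L) : Prop :=
  ∃ S : StructClass L, S.Countable ∧ ∀ A ∈ K, ∃ B ∈ S, Nonempty (A ≃[L] B)

/-- A Fraïssé class: nonempty, countably many members up to isomorphism, hereditary,
with the joint embedding and amalgamation properties. -/
def FraisseClass [L.IsRelational] (K : StructClass L) : Prop :=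
  K.Nonempty ∧ EssentiallyCountable K ∧ HereditaryC K ∧ JEP K ∧ AP K

/-- `M` is a Fraïssé limit of the class `K`: countable, ultrahomogeneous, with age `K`. -/
def IsFraisseLimitC [L.IsRelational] (K : StructClass L) (M : Type w) [L.Structure M] : Prop :=
  Countable M ∧ Ultrahomogeneous L M ∧ ageC L M = K

variable {L0 : FirstOrder.Language.{u0, v0}} {L1 : FirstOrder.Language.{u1, v1}}

/-- The language of the lexicographic product: the disjoint union of the two languages plus a
new binary relation symbol `E` (the unique relation symbol of `Language.graph`). -/
def lexLang (L0 : FirstOrder.Language.{u0, v0}) (L1 : FirstOrder.Language.{u1, v1}) :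
    FirstOrder.Language :=
  (L0.sum L1).sum Language.graph

/-- The language of the full product: the disjoint union of the two languages plus two
new binary relation symbols `E0` and `E1`. -/
def fullLang (L0 : FirstOrder.Language.{u0, v0}) (L1 : FirstOrder.Language.{u1, v1}) :
    FirstOrder.Language :=
  (L0.sum L1).sum (Language.graph.sum Language.graph)


instance lexLangIsRelational [L0.IsRelational] [L1.IsRelational] :
    (lexLang L0 L1).IsRelational :=
  inferInstanceAs (((L0.sum L1).sum Language.graph).IsRelational)

instance fullLangIsRelational [L0.IsRelational] [L1.IsRelational] :
    (fullLang L0 L1).IsRelational :=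
  inferInstanceAs (((L0.sum L1).sum (Language.graph.sum Language.graph)).IsRelational)

section Products

variable [L0.IsRelational] [L1.IsRelational]

/-- Interpretation of `L0` on a lexicographic product. -/
def lexStr0 {B : Type w} (A : B → Type w') [∀ b, L0.Structure (A b)] :
    L0.Structure (Σ b, A b) where
  funMap f _ := isEmptyElim f
  RelMap {n} R x := ∃ (b : B) (a : Fin n → A b), (∀ i, x i = ⟨b, a i⟩) ∧ RelMap R a

/-- Interpretation of `L1` on a lexicographic product. -/
def lexStr1 {B : Type w} [L1.Structure B] (A : B → Type w') :
    L1.Structure (Σ b, A b) where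
  funMap f _ := isEmptyElim f
  RelMap R x := RelMap R fun i => (x i).1

/-- Interpretation of the extra binary relation `E` on a lexicographic product. -/
def lexStrE {B : Type w} (A : B → Type w') : Language.graph.Structure (Σ b, A b) where
  funMap f _ := isEmptyElim f
  RelMap {n} R := match n, R with
    | _, .adj => fun x => (x 0).1 = (x 1).1

/-- The lexicographic product of the structures `A b` along `B`. -/
def lexStr {B : Type w} [L1.Structure B] (A : B → Type w') [∀ b, L0.Structure (A b)] :
    (lexLang L0 L1).Structure (Σ b, A b) :=
  @Language.sumStructure _ _ _
    (@Language.sumStructure _ _ _ (lexStr0 A) (lexStr1 A)) (lexStrE A)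

/-- The lexicographic product `A ≀ B` of two structures (as a type). -/
def lexProd (L0 : FirstOrder.Language.{u0, v0}) (L1 : FirstOrder.Language.{u1, v1})
    (A : Type w) (B : Type w') : Type max w w' :=
  Σ _ : B, A

instance lexProdStr (A : Type w) (B : Type w') [L0.Structure A] [L1.Structure B] :
    (lexLang L0 L1).Structure (lexProd L0 L1 A B) :=
  lexStr fun _ : B => A

/-- The lexicographic product of a family of bundled structures along a bundled structure. -/
def lexBundle (B : Bundled.{0} L1.Structure) (A : B → Bundled.{0} L0.Structure) :
    Bundled.{0} (lexLang L0 L1).Structure :=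
  ⟨Σ b : B, A b, lexStr fun b => (A b : Type)⟩

/-- The lexicographic product of two classes of structures. -/
def lexClass (K0 : StructClass L0) (K1 : StructClass L1) : StructClass (lexLang L0 L1) :=
  {C | ∃ B ∈ K1, ∃ A : B → Bundled.{0} L0.Structure, (∀ b, A b ∈ K0) ∧
    Nonempty (C ≃[lexLang L0 L1] lexBundle B A)}

/-- Interpretation of `L0` on a full product. -/
def fullStr0 (A : Type w) (B : Type w') [L0.Structure A] : L0.Structure (A × B) where
  funMap f _ := isEmptyElim f
  RelMap R x := RelMap R fun i => (x i).1

/-- Interpretation of `L1` on a full product. -/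
def fullStr1 (A : Type w) (B : Type w') [L1.Structure B] : L1.Structure (A × B) where
  funMap f _ := isEmptyElim f
  RelMap R x := RelMap R fun i => (x i).2

/-- Interpretation of `E0` on a full product. -/
def fullStrE0 (A : Type w) (B : Type w') : Language.graph.Structure (A × B) where
  funMap f _ := isEmptyElim f
  RelMap {n} R := match n, R with
    | _, .adj => fun x => (x 0).1 = (x 1).1

/-- Interpretation of `E1` on a full product. -/
def fullStrE1 (A : Type w) (B : Type w') : Language.graph.Structure (A × B) where
  funMap f _ := isEmptyElim f
  RelMap {n} R := match n, R with
    | _, .adj => fun x => (x 0).2 = (x 1).2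

/-- The full product `A ⊠ B` of two structures, as a structure on `A × B`. -/
def fullStr (A : Type w) (B : Type w') [L0.Structure A] [L1.Structure B] :
    (fullLang L0 L1).Structure (A × B) :=
  @Language.sumStructure _ _ _
    (@Language.sumStructure _ _ _ (fullStr0 A B) (fullStr1 A B))
    (@Language.sumStructure _ _ _ (fullStrE0 A B) (fullStrE1 A B))

/-- The full product `A ⊠ B` of two structures (as a type). -/
def fullProd (L0 : FirstOrder.Language.{u0, v0}) (L1 : FirstOrder.Language.{u1, v1})
    (A : Type w) (B : Type w') : Type max w w' :=
  A × B

instance fullProdStr (A : Type w) (B : Type w') [L0.Structure A] [L1.Structure B] :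
    (fullLang L0 L1).Structure (fullProd L0 L1 A B) :=
  fullStr A B

/-- The full product of two bundled structures. -/
def fullBundle (A : Bundled.{0} L0.Structure) (B : Bundled.{0} L1.Structure) :
    Bundled.{0} (fullLang L0 L1).Structure :=
  ⟨A × B, fullStr A B⟩

/-- The full product of two classes of structures. -/
def fullClass (K0 : StructClass L0) (K1 : StructClass L1) : StructClass (fullLang L0 L1) :=
  {C | Finite C ∧ ∃ A ∈ K0, ∃ B ∈ K1, Nonempty (C ↪[fullLang L0 L1] fullBundle A B)}

end Products

/-- The free superposition of two classes of structures: all finite structures in the disjoint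
union language whose reducts to the two languages lie in the respective classes. -/
def freeClass (K0 : StructClass L0) (K1 : StructClass L1) : StructClass (L0.sum L1) :=
  {C | Finite C ∧
    (⟨C, (LHom.sumInl (L := L0) (L' := L1)).reduct C⟩ : Bundled.{0} L0.Structure) ∈ K0 ∧
    (⟨C, (LHom.sumInr (L := L0) (L' := L1)).reduct C⟩ : Bundled.{0} L1.Structure) ∈ K1}

/-- A configuration of the class `K` into `M^n`: an interpretation of the relation symbols of
`L0` as `L`-formulas with parameters from `M`, together with maps `f_A : A → M^n` for `A ∈ K`,
such that each relation of each `A ∈ K` is defined by the corresponding formula. -/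
structure Config (L0 : FirstOrder.Language.{u0, v0}) (K : StructClass L0)
    (L : FirstOrder.Language.{u, v}) (M : Type w) [L.Structure M] (n : ℕ) where
  I : ∀ {m : ℕ}, L0.Relations m → L.Formula ((Fin m × Fin n) ⊕ M)
  f : ∀ (A : Bundled.{0} L0.Structure), A ∈ K → A → Fin n → M
  compat : ∀ (A : Bundled.{0} L0.Structure) (hA : A ∈ K) {m : ℕ} (R : L0.Relations m)
      (a : Fin m → A),
    RelMap R a ↔ (I R).Realize (Sum.elim (fun p => f A hA (a p.1) p.2) id)

/-- A configuration is injective if all the maps `f_A` are injective. -/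
def Config.Injective {K : StructClass L0} {L : FirstOrder.Language.{u, v}} {M : Type w}
    [L.Structure M] {n : ℕ} (c : Config L0 K L M n) : Prop :=
  ∀ (A : Bundled.{0} L0.Structure) (hA : A ∈ K), Function.Injective (c.f A hA)

/-- A complete theory `T` admits a `K`-configuration if some model of `T` admits a
`K`-configuration into some finite power. -/
def AdmitsConfig (K : StructClass L0) {L : FirstOrder.Language.{u, v}} (T : L.Theory) : Prop :=
  ∃ (M : Type max u v) (_ : L.Structure M), M ⊨ T ∧ ∃ n : ℕ, Nonempty (Config L0 K L M n)

/-- `T` has an infinite model. -/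
def HasInfiniteModel {L : FirstOrder.Language.{u, v}} (T : L.Theory) : Prop :=
  ∃ (M : Type max u v) (_ : L.Structure M), M ⊨ T ∧ Infinite M

/-- The binary relation of a `Language.graph`-structure. -/
def rel2 {M : Type w} [Language.graph.Structure M] (x y : M) : Prop :=
  RelMap Language.adj ![x, y]

/-- The class of all finite strict partial orders. -/
def POClass : StructClass Language.graph :=
  {A | Finite A ∧ (∀ x : A, ¬ rel2 x x) ∧ ∀ x y z : A, rel2 x y → rel2 y z → rel2 x z}

/-- The class of all finite tournaments. -/
def TournClass : StructClass Language.graph :=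
  {A | Finite A ∧ (∀ x : A, ¬ rel2 x x) ∧ ∀ x y : A, x ≠ y → Xor' (rel2 x y) (rel2 y x)}

/-- The class of all finite directed graphs. -/
def DGClass : StructClass Language.graph :=
  {A | Finite A ∧ ∀ x : A, ¬ rel2 x x}

/-- The class of all finite (simple) graphs. -/
def GClass : StructClass Language.graph :=
  {A | Finite A ∧ (∀ x : A, ¬ rel2 x x) ∧ ∀ x y : A, rel2 x y → rel2 y x}

/-!
A digraph `A` with vertices enumerated by `e : A ≃ Fin k` is coded inside a single "membership
pattern": a structure with points `x i` (`i < k`) and `y S` (`S ⊆ Fin k`) such that `x i → y S`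
iff `i ∈ S`. Sending `a` to the pair `(x (e a), y S_a)`, where `S_a = {i | e⁻¹ i → a}`, gives
`a → b` iff `x (e a) → y S_b`, so a configuration of the patterns into `M^n` yields one of all
finite digraphs into `M^(2n)`. Finite partial orders, graphs and tournaments all contain
membership patterns (for tournaments, orient the pairs the pattern leaves open arbitrarily), and
all are digraphs, so a theory configures one of the four classes iff it configures all of them.
-/

def ofRel {α : Type} (r : α → α → Prop) : Bundled.{0} Language.graph.Structure :=
  ⟨α, { funMap := fun f _ => isEmptyElim f
        RelMap := fun {m} R => match m, R with
          | _, .adj => fun x => r (x 0) (x 1) }⟩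

theorem rel2_ofRel {α : Type} (r : α → α → Prop) (x y : α) :
    rel2 (M := ofRel r) x y ↔ r x y := Iff.rfl

theorem rel2_iff_relMap {M : Type w} [Language.graph.Structure M] (a : Fin 2 → M) :
    rel2 (a 0) (a 1) ↔ RelMap Language.adj a := by
  rw [rel2, show ![a 0, a 1] = a from List.ofFn_inj.mp rfl]

def Config.restrict {L0 : FirstOrder.Language.{u0, v0}} {K K' : StructClass L0}
    (h : K' ⊆ K) {M : Type w} [L.Structure M] {n : ℕ} (c : Config L0 K L M n) :
    Config L0 K' L M n where
  I := c.I
  f A hA := c.f A (h hA)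
  compat A hA := c.compat A (h hA)

theorem AdmitsConfig.of_subset {L0 : FirstOrder.Language.{u0, v0}} {K K' : StructClass L0}
    (h : K' ⊆ K) {T : L.Theory} (hK : AdmitsConfig K T) : AdmitsConfig K' T := by
  obtain ⟨M, _, hM, n, ⟨c⟩⟩ := hK
  exact ⟨M, _, hM, n, ⟨c.restrict h⟩⟩

def PairEncodable (K' K : StructClass Language.graph) : Prop :=
  ∀ A ∈ K', ∃ B ∈ K, ∃ x y : A → B, ∀ a b : A, rel2 a b ↔ rel2 (x a) (y b)

/-- An edge `a → b` is read off as `x a → y b`: the first variable contributes the `x`-half of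
its coordinates in `M^(n + n)`, the second one its `y`-half. -/
def splitRelabel (M : Type w) (m n : ℕ) : (Fin m × Fin n) ⊕ M → (Fin m × Fin (n + n)) ⊕ M :=
  Sum.map (fun p => (p.1, if (p.1 : ℕ) = 0 then Fin.castAdd n p.2 else Fin.natAdd n p.2)) id

theorem Config.nonempty_of_pairEncodable {K K' : StructClass Language.graph} {M : Type w}
    [L.Structure M] {n : ℕ} (c : Config Language.graph K L M n) (hK : PairEncodable K' K) :
    Nonempty (Config Language.graph K' L M (n + n)) := by
  choose B hB x y hxy using hK
  refine ⟨{ I := fun {m} R => (c.I R).relabel (splitRelabel M m n)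
            f := fun A hA a =>
              Fin.append (c.f _ (hB A hA) (x A hA a)) (c.f _ (hB A hA) (y A hA a))
            compat := ?_ }⟩
  rintro A hA _ ⟨⟩ a
  have hval : (Sum.elim (fun p : Fin 2 × Fin (n + n) => Fin.append
        (c.f _ (hB A hA) (x A hA (a p.1))) (c.f _ (hB A hA) (y A hA (a p.1))) p.2) id) ∘
          splitRelabel M 2 n =
      Sum.elim (fun p => c.f _ (hB A hA) (![x A hA (a 0), y A hA (a 1)] p.1) p.2) id := by
    funext z
    rcases z with ⟨i, j⟩ | z
    · fin_cases i <;>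
        simp [splitRelabel, Fin.append_left, Fin.append_right, -Fin.natAdd_eq_addNat]
    · rfl
  rw [Formula.realize_relabel, hval, ← rel2_iff_relMap, hxy]
  exact c.compat _ (hB A hA) Language.adj ![x A hA (a 0), y A hA (a 1)]

theorem AdmitsConfig.of_pairEncodable {K K' : StructClass Language.graph} {T : L.Theory}
    (hK : PairEncodable K' K) (h : AdmitsConfig K T) : AdmitsConfig K' T := by
  obtain ⟨M, _, hM, n, ⟨c⟩⟩ := h
  exact ⟨M, _, hM, n + n, c.nonempty_of_pairEncodable hK⟩

def HasMembershipPatterns (K : StructClass Language.graph) : Prop :=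
  ∀ k : ℕ, ∃ B ∈ K, ∃ (x : Fin k → B) (y : Set (Fin k) → B),
    ∀ i S, rel2 (x i) (y S) ↔ i ∈ S

theorem HasMembershipPatterns.pairEncodable {K K' : StructClass Language.graph}
    (hK : HasMembershipPatterns K) (hK' : AllFinite K') : PairEncodable K' K := by
  intro A hA
  have := hK' A hA
  let e := Finite.equivFin A
  obtain ⟨B, hB, x, y, hxy⟩ := hK (Nat.card A)
  refine ⟨B, hB, fun a => x (e a), fun b => y {i | rel2 (e.symm i) b}, fun a b => ?_⟩
  rw [hxy, Set.mem_ofPred_eq, Equiv.symm_apply_apply]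

theorem admitsConfig_iff_DGClass {K : StructClass Language.graph} {T : L.Theory}
    (hK : HasMembershipPatterns K) (hDG : K ⊆ DGClass) :
    AdmitsConfig K T ↔ AdmitsConfig DGClass T :=
  ⟨.of_pairEncodable (hK.pairEncodable (K' := DGClass) fun _ hA => hA.1), .of_subset hDG⟩

section Patterns

variable {α : Type}

def tournamentCompletion (r : α → α → Prop) (x y : α) : Prop :=
  r x y ∨ (¬ r y x ∧ WellOrderingRel x y)

theorem xor_tournamentCompletion {r : α → α → Prop} (hr : ∀ x y, r x y → ¬ r y x) {x y : α}
    (hxy : x ≠ y) : Xor (tournamentCompletion r x y) (tournamentCompletion r y x) := by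
  unfold tournamentCompletion
  by_cases h : r x y
  · simp [Xor, h, hr x y h]
  by_cases h' : r y x
  · simp [Xor, h, h']
  rcases trichotomous_of WellOrderingRel x y with hw | rfl | hw
  · simp [Xor, h, h', hw, asymm hw]
  · exact absurd rfl hxy
  · simp [Xor, h, h', hw, asymm hw]

theorem irrefl_tournamentCompletion {r : α → α → Prop} (hr : ∀ x y, r x y → ¬ r y x) (x : α) :
    ¬ tournamentCompletion r x x := by
  rintro (h | ⟨-, h⟩)
  · exact hr x x h h
  · exact irrefl_of WellOrderingRel x h

def memberRel (k : ℕ) : Fin k ⊕ Set (Fin k) → Fin k ⊕ Set (Fin k) → Prop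
  | .inl i, .inr S => i ∈ S
  | _, _ => False

def memberOrientation (k : ℕ) : Fin k ⊕ Set (Fin k) → Fin k ⊕ Set (Fin k) → Prop
  | .inl i, .inr S => i ∈ S
  | .inr S, .inl i => i ∉ S
  | _, _ => False

theorem memberOrientation_asymm (k : ℕ) (x y : Fin k ⊕ Set (Fin k)) :
    memberOrientation k x y → ¬ memberOrientation k y x := by
  rcases x with x | x <;> rcases y with y | y <;> simp [memberOrientation]

theorem HasMembershipPatterns.of_ofRel {K : StructClass Language.graph}
    (r : ∀ k, Fin k ⊕ Set (Fin k) → Fin k ⊕ Set (Fin k) → Prop)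
    (hr : ∀ k i S, r k (.inl i) (.inr S) ↔ i ∈ S) (hK : ∀ k, ofRel (r k) ∈ K) :
    HasMembershipPatterns K :=
  fun k => ⟨_, hK k, Sum.inl, Sum.inr, hr k⟩

theorem hasMembershipPatterns_POClass : HasMembershipPatterns POClass := by
  refine .of_ofRel memberRel (fun _ _ _ => Iff.rfl) fun k => ⟨Finite.instSum, ?_, ?_⟩
  · rintro (i | S) <;> exact id
  · rintro (x | x) (y | y) (z | z) <;> simp [rel2_ofRel, memberRel]

theorem hasMembershipPatterns_TournClass : HasMembershipPatterns TournClass := by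
  refine .of_ofRel (fun k => tournamentCompletion (memberOrientation k))
    (fun k i S => ?_) fun k => ⟨Finite.instSum, ?_, ?_⟩
  · simp only [tournamentCompletion, memberOrientation, not_not]
    exact or_iff_left_of_imp And.left
  · exact irrefl_tournamentCompletion (memberOrientation_asymm k)
  · exact fun _ _ => xor_tournamentCompletion (memberOrientation_asymm k)

theorem hasMembershipPatterns_GClass : HasMembershipPatterns GClass := by
  refine .of_ofRel (fun k => Relation.SymmGen (memberRel k))
    (fun k i S => or_iff_left id) fun k => ⟨Finite.instSum, ?_, fun _ _ => Or.symm⟩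
  rintro (i | S) (h | h) <;> exact h

end Patterns

theorem stmt18_general (L : FirstOrder.Language.{u, v}) (T' : L.Theory) :
    (AdmitsConfig POClass T' ↔ AdmitsConfig TournClass T') ∧
    (AdmitsConfig TournClass T' ↔ AdmitsConfig DGClass T') ∧
    (AdmitsConfig DGClass T' ↔ AdmitsConfig GClass T') := by
  have hPO := admitsConfig_iff_DGClass (T := T') hasMembershipPatterns_POClass
    fun _ hA => ⟨hA.1, hA.2.1⟩
  have hT := admitsConfig_iff_DGClass (T := T') hasMembershipPatterns_TournClass
    fun _ hA => ⟨hA.1, hA.2.1⟩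
  have hG := admitsConfig_iff_DGClass (T := T') hasMembershipPatterns_GClass
    fun _ hA => ⟨hA.1, hA.2.1⟩
  exact ⟨hPO.trans hT.symm, hT, hG.symm⟩

/-- for complete theories with infinite models, admitting configurations of
finite partial orders, tournaments, directed graphs, and graphs are all equivalent. -/
theorem stmt18 (L : FirstOrder.Language.{u, v}) (T' : L.Theory) (hc : T'.IsComplete)
    (hinf : HasInfiniteModel T') :
    (AdmitsConfig POClass T' ↔ AdmitsConfig TournClass T') ∧
    (AdmitsConfig TournClass T' ↔ AdmitsConfig DGClass T') ∧
    (AdmitsConfig DGClass T' ↔ AdmitsConfig GClass T') :=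
  stmt18_general L T'

end ProductsPaper
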